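/- arXiv:2505.18037 — 5 statements merged into one kernel-verified Lean document; each statement's English description precedes it below -/
import Mathlib

section
/- For any real p in (0,1) and any integer t ≥ 1, the sum ∑_{i=1}^{t} (i+1)·i·(σ_{i-1} - σ_i) ≤ 2·ς·p·t^{2-p}, where σ_i := ς·(i+1)^{-p} and ς > 0. -/
open Real Finset

/-
Since `σ (i - 1) - σ i = ς * (i ^ (-p) - (i + 1) ^ (-p))`, Bernoulli's inequality (through
`(1 + 1/i) ^ (-p) ≥ 1 - p / i`) gives the tangent-line bound
`i ^ (-p) - (i + 1) ^ (-p) ≤ p * i ^ (-p - 1)`. With `i + 1 ≤ 2 * i` every term is then at most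
`2 * ς * p * i ^ (1 - p) ≤ 2 * ς * p * t ^ (1 - p)`, and there are `t` terms.
-/

namespace Real

variable {p : ℝ}

lemma one_sub_mul_le_one_add_rpow_neg {s : ℝ} (hs : 0 ≤ s) (hp0 : 0 ≤ p) (hp1 : p ≤ 1) :
    1 - p * s ≤ (1 + s) ^ (-p) := by
  have hps : 0 ≤ p * s := mul_nonneg hp0 hs
  rw [rpow_neg (by linarith)]
  calc 1 - p * s ≤ (1 + p * s)⁻¹ := by
        rw [← one_div, le_div_iff₀ (by positivity)]
        nlinarith
    _ ≤ ((1 + s) ^ p)⁻¹ :=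
        inv_anti₀ (by positivity) (rpow_one_add_le_one_add_mul_self (by linarith) hp0 hp1)

lemma rpow_neg_sub_rpow_neg_add_le {x h : ℝ} (hx : 0 < x) (hh : 0 ≤ h) (hp0 : 0 ≤ p)
    (hp1 : p ≤ 1) : x ^ (-p) - (x + h) ^ (-p) ≤ p * h * x ^ (-p - 1) := by
  have hsplit : (x + h) ^ (-p) = x ^ (-p) * (1 + h / x) ^ (-p) := by
    rw [← mul_rpow hx.le (by positivity)]
    congr 1
    field_simp
  have hbern := one_sub_mul_le_one_add_rpow_neg (div_nonneg hh hx.le) hp0 hp1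
  rw [hsplit, rpow_sub_one hx.ne']
  calc x ^ (-p) - x ^ (-p) * (1 + h / x) ^ (-p) ≤ x ^ (-p) - x ^ (-p) * (1 - p * (h / x)) := by
        gcongr
    _ = p * h * (x ^ (-p) / x) := by ring

lemma succ_mul_mul_rpow_neg_sub_le {x : ℝ} (hx : 1 ≤ x) (hp0 : 0 ≤ p) (hp1 : p ≤ 1) :
    (x + 1) * x * (x ^ (-p) - (x + 1) ^ (-p)) ≤ 2 * p * x ^ (1 - p) := by
  have hx0 : 0 < x := by linarith
  calc (x + 1) * x * (x ^ (-p) - (x + 1) ^ (-p)) ≤ (x + 1) * x * (p * 1 * x ^ (-p - 1)) := by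
        gcongr
        exact rpow_neg_sub_rpow_neg_add_le hx0 zero_le_one hp0 hp1
    _ = p * (x + 1) * x ^ (-p) := by
        rw [rpow_sub_one hx0.ne']
        field_simp
    _ ≤ p * (2 * x) * x ^ (-p) := by gcongr; linarith
    _ = 2 * p * x ^ (1 - p) := by
        rw [sub_eq_add_neg, rpow_add hx0, rpow_one]
        ring

end Real

theorem stmt_1_general (p ς : ℝ) (hp0 : 0 < p) (hp1 : p < 1) (hς : 0 < ς) (t : ℕ)
    (σ : ℕ → ℝ) (hσ : ∀ i, σ i = ς * ((i : ℝ) + 1) ^ (-p)) :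
    ∑ i ∈ Finset.Icc 1 t, ((i : ℝ) + 1) * (i : ℝ) * (σ (i - 1) - σ i)
      ≤ 2 * ς * p * (t : ℝ) ^ (2 - p) := by
  have hterm : ∀ i ∈ Icc 1 t,
      ((i : ℝ) + 1) * i * (σ (i - 1) - σ i) ≤ 2 * ς * p * (t : ℝ) ^ (1 - p) := by
    intro i hi
    obtain ⟨hi1, hit⟩ := mem_Icc.mp hi
    have hσpred : σ (i - 1) = ς * (i : ℝ) ^ (-p) := by
      rw [hσ, Nat.cast_sub hi1, Nat.cast_one, sub_add_cancel]
    have hi1' : (1 : ℝ) ≤ i := by exact_mod_cast hi1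
    calc ((i : ℝ) + 1) * i * (σ (i - 1) - σ i)
        = ς * (((i : ℝ) + 1) * i * ((i : ℝ) ^ (-p) - ((i : ℝ) + 1) ^ (-p))) := by
          rw [hσpred, hσ]; ring
      _ ≤ ς * (2 * p * (i : ℝ) ^ (1 - p)) :=
          mul_le_mul_of_nonneg_left (succ_mul_mul_rpow_neg_sub_le hi1' hp0.le hp1.le) hς.le
      _ = 2 * ς * p * (i : ℝ) ^ (1 - p) := by ring
      _ ≤ 2 * ς * p * (t : ℝ) ^ (1 - p) := by gcongr
  calc ∑ i ∈ Icc 1 t, ((i : ℝ) + 1) * (i : ℝ) * (σ (i - 1) - σ i)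
      ≤ #(Icc 1 t) • (2 * ς * p * (t : ℝ) ^ (1 - p)) := sum_le_card_nsmul _ _ _ hterm
    _ = 2 * ς * p * (t : ℝ) ^ (2 - p) := by
        rw [Nat.card_Icc, add_tsub_cancel_right, nsmul_eq_mul,
          show 2 - p = 1 + (1 - p) by ring, rpow_add' t.cast_nonneg (by linarith), rpow_one]
        ring

theorem stmt_1 (p ς : ℝ) (hp0 : 0 < p) (hp1 : p < 1) (hς : 0 < ς) (t : ℕ) (ht : 1 ≤ t)
    (σ : ℕ → ℝ) (hσ : ∀ i, σ i = ς * ((i : ℝ) + 1) ^ (-p)) :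
    ∑ i ∈ Finset.Icc 1 t, ((i : ℝ) + 1) * (i : ℝ) * (σ (i - 1) - σ i)
      ≤ 2 * ς * p * (t : ℝ) ^ (2 - p) :=
  stmt_1_general p ς hp0 hp1 hς t σ hσ
end

section
/- For any real p in (0,1) and integer t ≥ 1, if σ_i := ς·(i+1)^{-p} for some ς > 0, then ∑_{i=1}^{t}(i+1)·i·(σ_{i-1} - σ_i) / ((t+1)·t·σ_t) ≤ 2p. -/
/-!
Bernoulli's inequality gives `(x + 1)^(-p) ≥ x^(-p) (1 - p/x)`, so the `i`-th summand is at most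
`p (i + 1) i^(-p) ≤ 2p i^(1-p) ≤ 2p (t + 1)^(1-p)`; summing `t` of them gives `2p` times the
denominator. The scale `ς` cancels between numerator and denominator.
-/

open Real Finset

lemma one_sub_mul_le_one_add_rpow_neg {p s : ℝ} (hp0 : 0 ≤ p) (hp1 : p ≤ 1) (hs : 0 ≤ s) :
    1 - p * s ≤ (1 + s) ^ (-p) := by
  have hps : 0 < 1 + p * s := by positivity
  calc 1 - p * s ≤ (1 + p * s)⁻¹ := by
        rw [← one_div, le_div_iff₀ hps]
        nlinarith [sq_nonneg (p * s)]
    _ ≤ (1 + s) ^ (-p) := by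
        rw [rpow_neg (by positivity)]
        exact inv_anti₀ (by positivity) (rpow_one_add_le_one_add_mul_self (by linarith) hp0 hp1)

lemma mul_rpow_neg_sub_rpow_neg_add_one_le {p x : ℝ} (hp0 : 0 ≤ p) (hp1 : p ≤ 1) (hx : 0 < x) :
    x * (x ^ (-p) - (x + 1) ^ (-p)) ≤ p * x ^ (-p) := by
  have hsplit : (x + 1) ^ (-p) = x ^ (-p) * (1 + x⁻¹) ^ (-p) := by
    rw [← mul_rpow hx.le (by positivity), mul_add, mul_inv_cancel₀ hx.ne', mul_one]
  have hbern := one_sub_mul_le_one_add_rpow_neg hp0 hp1 (inv_nonneg.2 hx.le)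
  have hxp : 0 < x ^ (-p) := rpow_pos_of_pos hx _
  calc x * (x ^ (-p) - (x + 1) ^ (-p)) ≤ x * (x ^ (-p) * (p * x⁻¹)) := by
        rw [hsplit]; gcongr
        nlinarith [mul_le_mul_of_nonneg_left hbern hxp.le]
    _ = p * x ^ (-p) := by field_simp

lemma add_one_mul_rpow_neg_le {p x y : ℝ} (hp1 : p ≤ 1) (hx : 1 ≤ x) (hxy : x ≤ y) :
    (x + 1) * x ^ (-p) ≤ 2 * y ^ (1 - p) := by
  have hx0 : 0 < x := by linarith
  calc (x + 1) * x ^ (-p) ≤ 2 * (x * x ^ (-p)) := by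
        have := rpow_pos_of_pos hx0 (-p); nlinarith
    _ = 2 * x ^ (1 - p) := by rw [sub_eq_add_neg, rpow_add hx0, rpow_one]
    _ ≤ 2 * y ^ (1 - p) := by gcongr

lemma sum_Icc_mul_rpow_neg_sub_le {p : ℝ} (hp0 : 0 ≤ p) (hp1 : p ≤ 1) (t : ℕ) :
    ∑ i ∈ Icc 1 t, ((i : ℝ) + 1) * i * ((((i - 1 : ℕ) : ℝ) + 1) ^ (-p) - ((i : ℝ) + 1) ^ (-p))
      ≤ 2 * p * (((t : ℝ) + 1) * t * ((t : ℝ) + 1) ^ (-p)) := by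
  have hterm : ∀ i ∈ Icc 1 t,
      ((i : ℝ) + 1) * i * ((((i - 1 : ℕ) : ℝ) + 1) ^ (-p) - ((i : ℝ) + 1) ^ (-p))
        ≤ 2 * p * ((t : ℝ) + 1) ^ (1 - p) := by
    intro i hi
    obtain ⟨hi1, hit⟩ := mem_Icc.1 hi
    have hi1' : (1 : ℝ) ≤ i := by exact_mod_cast hi1
    rw [Nat.cast_pred hi1, sub_add_cancel, mul_assoc]
    calc ((i : ℝ) + 1) * (i * ((i : ℝ) ^ (-p) - ((i : ℝ) + 1) ^ (-p)))
        ≤ ((i : ℝ) + 1) * (p * (i : ℝ) ^ (-p)) :=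
          mul_le_mul_of_nonneg_left
            (mul_rpow_neg_sub_rpow_neg_add_one_le hp0 hp1 (by linarith)) (by positivity)
      _ = p * (((i : ℝ) + 1) * (i : ℝ) ^ (-p)) := by ring
      _ ≤ p * (2 * ((t : ℝ) + 1) ^ (1 - p)) :=
          mul_le_mul_of_nonneg_left
            (add_one_mul_rpow_neg_le hp1 hi1' (by norm_cast; omega)) hp0
      _ = 2 * p * ((t : ℝ) + 1) ^ (1 - p) := by ring
  calc _ ≤ (Icc 1 t).card • (2 * p * ((t : ℝ) + 1) ^ (1 - p)) := sum_le_card_nsmul _ _ _ hterm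
    _ = 2 * p * (((t : ℝ) + 1) * t * ((t : ℝ) + 1) ^ (-p)) := by
      rw [Nat.card_Icc, Nat.add_sub_cancel, nsmul_eq_mul, sub_eq_add_neg,
        rpow_add (by positivity), rpow_one]
      ring

theorem stmt_2_general (p ς : ℝ) (hp0 : 0 < p) (hp1 : p < 1) (t : ℕ)
    (σ : ℕ → ℝ) (hσ : ∀ i, σ i = ς * ((i : ℝ) + 1) ^ (-p)) :
    (∑ i ∈ Finset.Icc 1 t, ((i : ℝ) + 1) * (i : ℝ) * (σ (i - 1) - σ i))
      / (((t : ℝ) + 1) * (t : ℝ) * σ t) ≤ 2 * p := by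
  rcases eq_or_ne ς 0 with rfl | hς
  · simp only [hσ, zero_mul, sub_self, mul_zero, sum_const_zero, div_zero]; positivity
  simp_rw [hσ, ← mul_sub, mul_left_comm _ ς, ← mul_sum]
  rw [mul_div_mul_left _ _ hς]
  exact div_le_of_le_mul₀ (by positivity) (by positivity)
    (sum_Icc_mul_rpow_neg_sub_le hp0.le hp1.le t)

theorem stmt_2 (p ς : ℝ) (hp0 : 0 < p) (hp1 : p < 1) (hς : 0 < ς) (t : ℕ) (ht : 1 ≤ t)
    (σ : ℕ → ℝ) (hσ : ∀ i, σ i = ς * ((i : ℝ) + 1) ^ (-p)) :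
    (∑ i ∈ Finset.Icc 1 t, ((i : ℝ) + 1) * (i : ℝ) * (σ (i - 1) - σ i))
      / (((t : ℝ) + 1) * (t : ℝ) * σ t) ≤ 2 * p :=
  stmt_2_general p ς hp0 hp1 t σ hσ
end

section
/- For any integer t ≥ 1 and real p ∈ (0,1/2], ∑_{i=1}^{t}(i+1)·i·(σ_{i-1} - σ_i)·σ_i ≤ 2p·ς²·t^{2(1-p)}, where σ_i := ς·(i+1)^{-p} and ς > 0. -/
/-!
Writing `σ_i = ς (i+1)^{-p}`, Bernoulli's inequality `(1 + 1/i)^p ≤ 1 + p/i` gives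
`i (σ_{i-1} - σ_i) ≤ p σ_{i-1}`, so with `i + 1 ≤ 2i` and `σ_i ≤ σ_{i-1}` each summand is at most
`2 p ς² i^{1-2p} ≤ 2 p ς² t^{1-2p}`, and there are `t` summands.
-/

open Real Finset

lemma add_one_mul_mul_rpow_neg_sub_le {p ς x : ℝ} (hp0 : 0 ≤ p) (hp1 : p ≤ 1) (hx : 1 ≤ x) :
    (x + 1) * x * (ς * x ^ (-p) - ς * (x + 1) ^ (-p)) * (ς * (x + 1) ^ (-p))
      ≤ 2 * p * ς ^ 2 * x ^ (1 - 2 * p) := by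
  have hx0 : 0 < x := by linarith
  have hdiff := mul_rpow_neg_sub_rpow_neg_add_one_le hp0 hp1 hx0
  have hmono : (x + 1) ^ (-p) ≤ x ^ (-p) :=
    rpow_le_rpow_of_nonpos hx0 (by linarith) (by linarith)
  have hpow : x * (x ^ (-p) * x ^ (-p)) = x ^ (1 - 2 * p) := by
    rw [← rpow_add hx0, mul_comm, ← rpow_add_one hx0.ne']
    ring_nf
  calc (x + 1) * x * (ς * x ^ (-p) - ς * (x + 1) ^ (-p)) * (ς * (x + 1) ^ (-p))
      = ς ^ 2 * ((x + 1) * (x * (x ^ (-p) - (x + 1) ^ (-p))) * (x + 1) ^ (-p)) := by ring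
    _ ≤ ς ^ 2 * ((2 * x) * (p * x ^ (-p)) * x ^ (-p)) := by
        gcongr
        linarith
    _ = 2 * p * ς ^ 2 * x ^ (1 - 2 * p) := by rw [← hpow]; ring

theorem stmt_3_general (p ς : ℝ) (hp0 : 0 < p) (hp1 : p ≤ 1 / 2) (t : ℕ) (ht : 1 ≤ t)
    (σ : ℕ → ℝ) (hσ : ∀ i, σ i = ς * ((i : ℝ) + 1) ^ (-p)) :
    ∑ i ∈ Finset.Icc 1 t, ((i : ℝ) + 1) * (i : ℝ) * (σ (i - 1) - σ i) * σ i
      ≤ 2 * p * ς ^ 2 * (t : ℝ) ^ (2 * (1 - p)) := by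
  have hterm : ∀ i ∈ Icc 1 t, ((i : ℝ) + 1) * (i : ℝ) * (σ (i - 1) - σ i) * σ i
      ≤ 2 * p * ς ^ 2 * (t : ℝ) ^ (1 - 2 * p) := by
    intro i hi
    obtain ⟨hi1, hit⟩ := mem_Icc.mp hi
    simp only [hσ, Nat.cast_sub hi1, Nat.cast_one, sub_add_cancel]
    calc _ ≤ 2 * p * ς ^ 2 * (i : ℝ) ^ (1 - 2 * p) :=
          add_one_mul_mul_rpow_neg_sub_le hp0.le (by linarith) (by exact_mod_cast hi1)
      _ ≤ 2 * p * ς ^ 2 * (t : ℝ) ^ (1 - 2 * p) := by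
          gcongr
          linarith
  have ht0 : (0 : ℝ) < t := by exact_mod_cast ht
  calc _ ≤ ∑ _i ∈ Icc 1 t, 2 * p * ς ^ 2 * (t : ℝ) ^ (1 - 2 * p) := sum_le_sum hterm
    _ = 2 * p * ς ^ 2 * (t : ℝ) ^ (2 * (1 - p)) := by
        rw [sum_const, Nat.card_Icc, nsmul_eq_mul, add_tsub_cancel_right,
          show 2 * (1 - p) = 1 + (1 - 2 * p) by ring, rpow_add ht0, rpow_one]
        ring

theorem stmt_3 (p ς : ℝ) (hp0 : 0 < p) (hp1 : p ≤ 1 / 2) (hς : 0 < ς) (t : ℕ) (ht : 1 ≤ t)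
    (σ : ℕ → ℝ) (hσ : ∀ i, σ i = ς * ((i : ℝ) + 1) ^ (-p)) :
    ∑ i ∈ Finset.Icc 1 t, ((i : ℝ) + 1) * (i : ℝ) * (σ (i - 1) - σ i) * σ i
      ≤ 2 * p * ς ^ 2 * (t : ℝ) ^ (2 * (1 - p)) :=
  stmt_3_general p ς hp0 hp1 t ht σ hσ
end

section
/- Let (σ_t)_{t≥0} be positive, nonincreasing with lim_{t→∞} t·(σ_t/σ_{t+1} − 1) = L where 0 ≤ L < 2. Then lim_{t→∞} (∑_{i=1}^{t} (i+1)·i·(σ_{i-1} − σ_i)) / ((t+1)·t·σ_t) = L/(2−L), provided (t+1)t σ_t is strictly increasing and diverges to ∞. -/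
/-!
Apply the Stolz–Cesàro theorem with `b t = (t+1) t σ_t`.
Writing `u_t = t (σ_t / σ_{t+1} - 1)`, the consecutive differences are
`Δa_t = (t+1) σ_{t+1} (1 + 2/t) u_t` and `Δb_t = (t+1) σ_{t+1} (2 - u_t)`,
so `Δa_t / Δb_t → L / (2 - L)`.
-/

open Filter Asymptotics Finset

theorem tendsto_div_nhds_zero_of_tendsto_sub_div_sub {d b : ℕ → ℝ} (hb : StrictMono b)
    (hb_top : Tendsto b atTop atTop)
    (h : Tendsto (fun n => (d (n + 1) - d n) / (b (n + 1) - b n)) atTop (nhds 0)) :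
    Tendsto (fun n => d n / b n) atTop (nhds 0) := by
  have hΔb : ∀ n, 0 < b (n + 1) - b n := fun n => sub_pos.2 (hb n.lt_succ_self)
  have hΔ : (fun n => d (n + 1) - d n) =o[atTop] fun n => b (n + 1) - b n := by
    rw [isLittleO_iff_tendsto fun n hn => absurd hn (hΔb n).ne']
    exact h
  have hb_norm : Tendsto (fun n => ‖b n‖) atTop atTop := tendsto_norm_atTop_atTop.comp hb_top
  have hconst : ∀ x : ℝ, (fun _ : ℕ => x) =o[atTop] b :=
    fun x => isLittleO_const_left.2 (Or.inr hb_norm)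
  have hsum : (fun n => d n - d 0) =o[atTop] fun n => b n - b 0 := by
    have := hΔ.sum_range (fun i => (hΔb i).le) <| by
      simpa only [sum_range_sub, ← sub_eq_add_neg] using
        tendsto_atTop_add_const_right atTop (-b 0) hb_top
    simpa only [sum_range_sub] using this
  have hb_equiv : (fun n => b n - b 0) ~[atTop] b := by
    refine (hconst (-b 0)).congr_left fun n => ?_
    simp
  have hd : d =o[atTop] b := by
    simpa using (hsum.trans_isBigO hb_equiv.isBigO).add (hconst (d 0))
  exact hd.tendsto_div_nhds_zero

/-- The Stolz–Cesàro theorem. -/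
theorem tendsto_div_of_tendsto_sub_div_sub {a b : ℕ → ℝ} {c : ℝ} (hb : StrictMono b)
    (hb_top : Tendsto b atTop atTop)
    (h : Tendsto (fun n => (a (n + 1) - a n) / (b (n + 1) - b n)) atTop (nhds c)) :
    Tendsto (fun n => a n / b n) atTop (nhds c) := by
  have hΔb : ∀ n, b (n + 1) - b n ≠ 0 := fun n => (sub_pos.2 (hb n.lt_succ_self)).ne'
  have hΔd : Tendsto (fun n => (a (n + 1) - c * b (n + 1) - (a n - c * b n)) /
      (b (n + 1) - b n)) atTop (nhds 0) := by
    rw [← sub_self c]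
    refine (h.sub_const c).congr fun n => ?_
    field_simp [hΔb n]
    ring
  have hd := tendsto_div_nhds_zero_of_tendsto_sub_div_sub (d := fun n => a n - c * b n) hb hb_top
    hΔd
  rw [← zero_add c]
  refine (hd.add_const c).congr' ?_
  filter_upwards [hb_top.eventually_gt_atTop 0] with n hn
  field_simp
  ring

theorem differenceQuotient_eq_of_ratio (σ : ℕ → ℝ) {t : ℕ} (ht : t ≠ 0)
    (hσ : σ (t + 1) ≠ 0) :
    ((t : ℝ) + 2) * (t + 1) * (σ t - σ (t + 1)) /
        ((t + 2) * (t + 1) * σ (t + 1) - (t + 1) * t * σ t)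
      = (1 + 2 / t) * (t * (σ t / σ (t + 1) - 1)) / (2 - t * (σ t / σ (t + 1) - 1)) := by
  have hc : ((t : ℝ) + 1) * σ (t + 1) ≠ 0 := mul_ne_zero (by positivity) hσ
  rw [← mul_div_mul_left _ (2 - t * (σ t / σ (t + 1) - 1)) hc]
  congr 1
  · field_simp
  · field_simp
    ring

theorem stmt_10_general (σ : ℕ → ℝ) (L : ℝ)
    (hpos : ∀ t, 0 < σ t)
    (hlim : Tendsto (fun t : ℕ => (t : ℝ) * (σ t / σ (t + 1) - 1)) atTop (nhds L))
    (hL2 : L < 2)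
    (hinc : StrictMono (fun t : ℕ => ((t : ℝ) + 1) * (t : ℝ) * σ t))
    (hdiv : Tendsto (fun t : ℕ => ((t : ℝ) + 1) * (t : ℝ) * σ t) atTop atTop) :
    Tendsto (fun t : ℕ =>
        (∑ i ∈ Finset.Icc 1 t, ((i : ℝ) + 1) * (i : ℝ) * (σ (i - 1) - σ i))
          / (((t : ℝ) + 1) * (t : ℝ) * σ t)) atTop (nhds (L / (2 - L))) := by
  refine tendsto_div_of_tendsto_sub_div_sub hinc hdiv ?_
  have hcoef : Tendsto (fun t : ℕ => 1 + 2 / (t : ℝ)) atTop (nhds 1) := by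
    simpa using tendsto_const_nhds.add (tendsto_const_div_atTop_nhds_zero_nat (2 : ℝ))
  have hratio := (hcoef.mul hlim).div (tendsto_const_nhds.sub hlim) (sub_ne_zero.2 hL2.ne')
  rw [one_mul] at hratio
  refine hratio.congr' ?_
  filter_upwards [eventually_ne_atTop 0] with t ht
  rw [sum_Icc_succ_top (by omega), add_sub_cancel_left, Pi.div_apply,
    ← differenceQuotient_eq_of_ratio σ ht (hpos (t + 1)).ne']
  push_cast
  ring_nf

theorem stmt_10 (σ : ℕ → ℝ) (L : ℝ)
    (hpos : ∀ t, 0 < σ t)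
    (hmono : ∀ t, σ (t + 1) ≤ σ t)
    (hlim : Tendsto (fun t : ℕ => (t : ℝ) * (σ t / σ (t + 1) - 1)) atTop (nhds L))
    (hL0 : 0 ≤ L) (hL2 : L < 2)
    (hinc : StrictMono (fun t : ℕ => ((t : ℝ) + 1) * (t : ℝ) * σ t))
    (hdiv : Tendsto (fun t : ℕ => ((t : ℝ) + 1) * (t : ℝ) * σ t) atTop atTop) :
    Tendsto (fun t : ℕ =>
        (∑ i ∈ Finset.Icc 1 t, ((i : ℝ) + 1) * (i : ℝ) * (σ (i - 1) - σ i))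
          / (((t : ℝ) + 1) * (t : ℝ) * σ t)) atTop (nhds (L / (2 - L))) :=
  stmt_10_general σ L hpos hlim hL2 hinc hdiv
end

section
/- Let Φ : ℝ^d → ℝ be convex and M-smooth on a convex compact set X of diameter D, let x ∈ X, let g ∈ ℝ^d be arbitrary, let v ∈ argmin_{u ∈ X} g^T u, let x⁺ = x + α(v − x) with α ∈ [0,1], and let x* ∈ X. Then Φ(x⁺) − Φ(x*) ≤ (1−α)(Φ(x) − Φ(x*)) + M·D²·α²/2 + 2·α·D·‖∇Φ(x) − g‖. -/
/-!
By the descent lemma for an `M`-Lipschitz gradient,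
`Φ x⁺ ≤ Φ x + α ⟪∇Φ x, v - x⟫ + M α² D² / 2`. Because `v` minimizes `⟪g, ·⟫` over `X`,
`⟪∇Φ x, v⟫` exceeds `⟪∇Φ x, x*⟫` by at most `‖∇Φ x - g‖ ‖v - x*‖`, and by convexity
`⟪∇Φ x, x* - x⟫ ≤ Φ x* - Φ x`.
-/

open Set AffineMap
open scoped RealInnerProductSpace

variable {E : Type*} [NormedAddCommGroup E] [InnerProductSpace ℝ E]

theorem inner_le_inner_add_norm_sub_mul {a g v w : E} (hvw : ⟪g, v⟫ ≤ ⟪g, w⟫) :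
    ⟪a, v⟫ ≤ ⟪a, w⟫ + ‖a - g‖ * ‖v - w‖ := by
  have hg : ⟪g, v - w⟫ ≤ 0 := by rw [inner_sub_right]; linarith
  calc ⟪a, v⟫ = ⟪a, w⟫ + ⟪g, v - w⟫ + ⟪a - g, v - w⟫ := by
        simp only [inner_sub_left, inner_sub_right]; ring
    _ ≤ ⟪a, w⟫ + 0 + ‖a - g‖ * ‖v - w‖ := by gcongr; exact real_inner_le_norm _ _
    _ = ⟪a, w⟫ + ‖a - g‖ * ‖v - w‖ := by ring

variable [CompleteSpace E]

theorem HasGradientAt.hasDerivAt_comp_lineMap {Φ : E → ℝ} {g x y : E} {t : ℝ}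
    (h : HasGradientAt Φ g (lineMap x y t)) :
    HasDerivAt (fun s : ℝ => Φ (lineMap x y s)) ⟪g, y - x⟫ t := by
  have := h.hasFDerivAt.comp_hasDerivAt t hasDerivAt_lineMap
  simp only [InnerProductSpace.toDual_apply_apply] at this
  exact this

theorem ConvexOn.inner_le_sub_of_hasGradientAt {s : Set E} {Φ : E → ℝ} {g x y : E}
    (hΦ : ConvexOn ℝ s Φ) (hx : x ∈ s) (hy : y ∈ s) (hg : HasGradientAt Φ g x) :
    ⟪g, y - x⟫ ≤ Φ y - Φ x := by
  have hline := hΦ.comp_affineMap (lineMap x y)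
  have := hline.le_slope_of_hasDerivAt (x := 0) (y := 1) (by simpa using hx) (by simpa using hy)
    zero_lt_one (HasGradientAt.hasDerivAt_comp_lineMap (by simpa using hg))
  simpa [slope_def_field] using this

theorem le_add_inner_add_of_lipschitz_gradient {s : Set E} (hs : Convex ℝ s) {Φ : E → ℝ}
    {Φ' : E → E} {M : ℝ} (hgrad : ∀ z ∈ s, HasGradientAt Φ (Φ' z) z)
    (hlip : ∀ y ∈ s, ∀ z ∈ s, ‖Φ' y - Φ' z‖ ≤ M * ‖y - z‖) {x y : E} (hx : x ∈ s) (hy : y ∈ s) :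
    Φ y ≤ Φ x + ⟪Φ' x, y - x⟫ + M / 2 * ‖y - x‖ ^ 2 := by
  -- `Φ` along the segment minus its quadratic upper model has nonpositive derivative.
  set r : ℝ → ℝ := fun t => Φ (lineMap x y t) - t * ⟪Φ' x, y - x⟫ - M / 2 * ‖y - x‖ ^ 2 * t ^ 2
  have hmem : ∀ t ∈ Icc (0 : ℝ) 1, lineMap x y t ∈ s := fun t ht => hs.lineMap_mem hx hy ht
  have hderiv : ∀ t ∈ Icc (0 : ℝ) 1,
      HasDerivAt r (⟪Φ' (lineMap x y t) - Φ' x, y - x⟫ - M * ‖y - x‖ ^ 2 * t) t := by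
    intro t ht
    refine ((((hgrad _ (hmem t ht)).hasDerivAt_comp_lineMap).sub
      ((hasDerivAt_id t).mul_const ⟪Φ' x, y - x⟫)).sub
      ((hasDerivAt_pow 2 t).const_mul (M / 2 * ‖y - x‖ ^ 2))).congr_deriv ?_
    simp only [inner_sub_left]
    ring
  have hslope : ∀ t ∈ Icc (0 : ℝ) 1,
      ⟪Φ' (lineMap x y t) - Φ' x, y - x⟫ ≤ M * ‖y - x‖ ^ 2 * t := by
    intro t ht
    calc ⟪Φ' (lineMap x y t) - Φ' x, y - x⟫
        ≤ ‖Φ' (lineMap x y t) - Φ' x‖ * ‖y - x‖ := real_inner_le_norm _ _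
      _ ≤ M * ‖lineMap x y t - x‖ * ‖y - x‖ := by gcongr; exact hlip _ (hmem t ht) _ hx
      _ = M * ‖y - x‖ ^ 2 * t := by
          rw [← dist_eq_norm, dist_lineMap_left, Real.norm_of_nonneg ht.1, dist_eq_norm']; ring
  have hanti : AntitoneOn r (Icc 0 1) :=
    antitoneOn_of_hasDerivWithinAt_nonpos (convex_Icc 0 1)
      (fun t ht => (hderiv t ht).continuousAt.continuousWithinAt)
      (fun t ht => (hderiv t (interior_subset ht)).hasDerivWithinAt)
      (fun t ht => sub_nonpos.2 (hslope t (interior_subset ht)))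
  have hr := hanti (left_mem_Icc.2 zero_le_one) (right_mem_Icc.2 zero_le_one) zero_le_one
  simp only [r, lineMap_apply_zero, lineMap_apply_one] at hr
  linarith

theorem stmt_13_general {d : ℕ} (X : Set (EuclideanSpace ℝ (Fin d)))
    (Φ : EuclideanSpace ℝ (Fin d) → ℝ) (Φ' : EuclideanSpace ℝ (Fin d) → EuclideanSpace ℝ (Fin d))
    (M D α : ℝ) (hM : 0 ≤ M)
    (hXconv : Convex ℝ X)
    (hdiam : ∀ y ∈ X, ∀ z ∈ X, ‖y - z‖ ≤ D)
    (hconv : ConvexOn ℝ X Φ)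
    (hgrad : ∀ x ∈ X, HasGradientAt Φ (Φ' x) x)
    (hlip : ∀ y ∈ X, ∀ z ∈ X, ‖Φ' y - Φ' z‖ ≤ M * ‖y - z‖)
    (x xstar v : EuclideanSpace ℝ (Fin d)) (g : EuclideanSpace ℝ (Fin d))
    (hx : x ∈ X) (hxstar : xstar ∈ X) (hv : v ∈ X)
    (hvmin : ∀ u ∈ X, inner ℝ g v ≤ (inner ℝ g u : ℝ))
    (hα0 : 0 ≤ α) (hα1 : α ≤ 1) :
    Φ (x + α • (v - x)) - Φ xstar
      ≤ (1 - α) * (Φ x - Φ xstar) + M * D ^ 2 * α ^ 2 / 2 + 2 * α * D * ‖Φ' x - g‖ := by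
  have hstep : x + α • (v - x) ∈ X := by
    simpa [lineMap_apply_module', add_comm] using hXconv.lineMap_mem hx hv ⟨hα0, hα1⟩
  have hdescent := le_add_inner_add_of_lipschitz_gradient hXconv hgrad hlip hx hstep
  rw [add_sub_cancel_left, inner_smul_right, norm_smul, Real.norm_of_nonneg hα0] at hdescent
  have hdir : ⟪Φ' x, v - x⟫ ≤ Φ xstar - Φ x + ‖Φ' x - g‖ * D := by
    have hlin := inner_le_inner_add_norm_sub_mul (a := Φ' x) (hvmin xstar hxstar)
    have hgap := hconv.inner_le_sub_of_hasGradientAt hx hxstar (hgrad x hx)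
    have herr := mul_le_mul_of_nonneg_left (hdiam v hv xstar hxstar) (norm_nonneg (Φ' x - g))
    rw [inner_sub_right] at hgap ⊢
    linarith
  have hvx : ‖v - x‖ ≤ D := hdiam v hv x hx
  have hD : 0 ≤ D := (norm_nonneg _).trans hvx
  have hnext : Φ (x + α • (v - x))
      ≤ Φ x + α * (Φ xstar - Φ x + ‖Φ' x - g‖ * D) + M / 2 * (α * D) ^ 2 := by
    calc Φ (x + α • (v - x)) ≤ Φ x + α * ⟪Φ' x, v - x⟫ + M / 2 * (α * ‖v - x‖) ^ 2 := hdescent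
      _ ≤ _ := by gcongr
  linarith [mul_nonneg (mul_nonneg hα0 hD) (norm_nonneg (Φ' x - g))]

theorem stmt_13 {d : ℕ} (X : Set (EuclideanSpace ℝ (Fin d)))
    (Φ : EuclideanSpace ℝ (Fin d) → ℝ) (Φ' : EuclideanSpace ℝ (Fin d) → EuclideanSpace ℝ (Fin d))
    (M D α : ℝ) (hM : 0 ≤ M) (hD : 0 ≤ D)
    (hXconv : Convex ℝ X) (hXcomp : IsCompact X)
    (hdiam : ∀ y ∈ X, ∀ z ∈ X, ‖y - z‖ ≤ D)
    (hconv : ConvexOn ℝ X Φ)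
    (hgrad : ∀ x ∈ X, HasGradientAt Φ (Φ' x) x)
    (hlip : ∀ y ∈ X, ∀ z ∈ X, ‖Φ' y - Φ' z‖ ≤ M * ‖y - z‖)
    (x xstar v : EuclideanSpace ℝ (Fin d)) (g : EuclideanSpace ℝ (Fin d))
    (hx : x ∈ X) (hxstar : xstar ∈ X) (hv : v ∈ X)
    (hvmin : ∀ u ∈ X, inner ℝ g v ≤ (inner ℝ g u : ℝ))
    (hα0 : 0 ≤ α) (hα1 : α ≤ 1) :
    Φ (x + α • (v - x)) - Φ xstar
      ≤ (1 - α) * (Φ x - Φ xstar) + M * D ^ 2 * α ^ 2 / 2 + 2 * α * D * ‖Φ' x - g‖ :=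
  stmt_13_general X Φ Φ' M D α hM hXconv hdiam hconv hgrad hlip x xstar v g hx hxstar hv hvmin hα0
    hα1
end
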